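/- arXiv:2108.04732 — 2 statements merged into one kernel-verified Lean document; each statement's English description precedes it below -/
import Mathlib

section
/- With the above notation: (a) if i∈I^re then for all x,y∈ℱ one has (yf_{i1},x)_L=(f_{i1},f_{i1})_L·(y,ϱ_i(x))_L and (f_{i1}y,x)_L=(f_{i1},f_{i1})_L·(y,ϱ^i(x))_L; (b) if i∈I^im, l≥1 and x∈ℱ has ϱ_{i,l}(x)=(x_{𝐜})_{𝐜} and ϱ^{i,l}(x)=(x'_{𝐜})_{𝐜} (𝐜 running over compositions of l), then for all y∈ℱ one has (yf_{il},x)_L=Σ_{𝐜}(f_{il},f_{i,𝐜})_L(y,x_{𝐜})_L and (f_{il}y,x)_L=Σ_{𝐜}(f_{il},f_{i,𝐜})_L(y,x'_{𝐜})_L; (c) if x∈ℱ is homogeneous with |x|≠0 and every component of ϱ_{i,l}(x) lies in ℛ for all (i,l)∈I^∞, then x∈ℛ; likewise if every component of ϱ^{i,l}(x) lies in ℛ for all (i,l)∈I^∞, then x∈ℛ. -/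
/- Setting: quantum Borcherds-Bozec algebras (Fan–Kang–Kim–Tolmachov, arXiv:2108.04732).
   Common framework for the free algebra ℱ over ℚ(q) with its Q₋-grading and
   twisted comultiplication ϱ. -/

open scoped TensorProduct

noncomputable section

/-- The base field ℚ(q). -/
abbrev KQ : Type := RatFunc ℚ

/-- The indeterminate q. -/
abbrev qq : KQ := RatFunc.X

/-- An even symmetrizable Borcherds–Cartan matrix together with its symmetrizing
integers `r i > 0`. -/
structure BCMatrix (I : Type*) where
  a : I → I → ℤ
  r : I → ℤ
  r_pos : ∀ i, 0 < r i
  symmetrizable : ∀ i j, r i * a i j = r j * a j i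
  diag : ∀ i, a i i = 2 ∨ (a i i ≤ 0 ∧ Even (a i i))
  offdiag : ∀ i j, i ≠ j → a i j ≤ 0

namespace BCMatrix

variable {I : Type*} (A : BCMatrix I)

/-- `(i,l) ∈ I^∞ = (I^re × {1}) ∪ (I^im × ℤ_{>0})`. -/
def validIdx (i : I) (l : ℕ) : Prop :=
  (A.a i i = 2 ∧ l = 1) ∨ (A.a i i ≤ 0 ∧ 1 ≤ l)

/-- The index set `I^∞`. -/
def Iinf := {p : I × ℕ // A.validIdx p.1 p.2}

/-- The free associative algebra `ℱ = ℚ(q)⟨f_{il} : (i,l) ∈ I^∞⟩`. -/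
abbrev FA := FreeAlgebra KQ A.Iinf

/-- The generators `f_{il}` of `ℱ`, with the conventions `f_{i0} = 1` and
`f_{il} = 0` for `(i,l)` out of range. -/
def gen (i : I) (l : ℕ) : A.FA :=
  letI := Classical.propDecidable (A.validIdx i l)
  if h : A.validIdx i l then FreeAlgebra.ι KQ (⟨(i,l), h⟩ : A.Iinf)
  else if l = 0 then 1 else 0

/-- The symmetric bilinear form on the root lattice `Q = ⊕ ℤ α_i`,
`(α_i, α_j) = r_i a_{ij}`. -/
def rootForm (β γ : I →₀ ℤ) : ℤ :=
  β.sum fun i m => γ.sum fun j n => m * n * (A.r i * A.a i j)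

/-- Degree of a word in the generators: `deg f_{il} = -l α_i`. -/
def wordDeg (w : List A.Iinf) : I →₀ ℤ :=
  (w.map fun p => Finsupp.single p.1.1 (-(p.1.2 : ℤ))).sum

/-- The weight space `ℱ_β`: the span of the words of degree `β`. -/
def weightSpace (β : I →₀ ℤ) : Submodule KQ A.FA :=
  Submodule.span KQ {x | ∃ w : List A.Iinf, A.wordDeg w = β ∧
    x = (w.map (FreeAlgebra.ι KQ)).prod}

/-- `q_i = q^{r_i}`. -/
def qi (i : I) : KQ := qq ^ (A.r i)

/-- `q_{(i)} = q^{(α_i,α_i)/2}`. -/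
def qsh (i : I) : KQ := qq ^ ((A.r i * A.a i i) / 2)

/-- The quantum integer `[n]_i`. -/
def qint (i : I) (n : ℕ) : KQ :=
  (A.qi i ^ (n : ℤ) - A.qi i ^ (-(n : ℤ))) / (A.qi i - (A.qi i)⁻¹)

/-- The quantum factorial `[n]_i!`. -/
def qfact (i : I) (n : ℕ) : KQ := ∏ k ∈ Finset.range n, A.qint i (k + 1)

/-- The divided power `f_i^{(n)} = f_{i1}^n/[n]_i!`. -/
def fdpow (i : I) (n : ℕ) : A.FA := (A.qfact i n)⁻¹ • (A.gen i 1) ^ n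

/-- For `i ∈ I^im` and a composition `𝐜 = (c₁,…,c_t)` of `l`,
`f_{i,𝐜} = f_{ic₁} ⋯ f_{ic_t}`. -/
def fcomp (i : I) {l : ℕ} (c : Composition l) : A.FA :=
  (c.blocks.map (A.gen i)).prod

end BCMatrix

/-- The comultiplication data on `ℱ`: the twisted multiplication on `ℱ ⊗ ℱ`
(`(x₁⊗x₂)(y₁⊗y₂) = q^{-(|x₂|,|y₁|)} x₁y₁ ⊗ x₂y₂`) and the algebra homomorphism
`ϱ : ℱ → ℱ ⊗ ℱ` with `ϱ(f_{il}) = Σ_{m+n=l} q_{(i)}^{-mn} f_{im} ⊗ f_{in}`. -/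
structure CoMult {I : Type*} (A : BCMatrix I) where
  tmul : (A.FA ⊗[KQ] A.FA) →ₗ[KQ] (A.FA ⊗[KQ] A.FA) →ₗ[KQ] (A.FA ⊗[KQ] A.FA)
  tmul_spec : ∀ (β γ : I →₀ ℤ) (x₁ x₂ y₁ y₂ : A.FA),
    x₂ ∈ A.weightSpace β → y₁ ∈ A.weightSpace γ →
    tmul (x₁ ⊗ₜ x₂) (y₁ ⊗ₜ y₂) =
      (qq ^ (-(A.rootForm β γ))) • ((x₁ * y₁) ⊗ₜ[KQ] (x₂ * y₂))
  rho : A.FA →ₗ[KQ] (A.FA ⊗[KQ] A.FA)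
  rho_one : rho 1 = 1 ⊗ₜ[KQ] 1
  rho_mul : ∀ x y, rho (x * y) = tmul (rho x) (rho y)
  rho_gen : ∀ i l, A.validIdx i l →
    rho (A.gen i l) = ∑ m ∈ Finset.range (l + 1),
      (A.qsh i ^ (-((m : ℤ) * ((l : ℤ) - (m : ℤ))))) • (A.gen i m ⊗ₜ[KQ] A.gen i (l - m))

/-- Lusztig's bilinear form `( , )_L` on `ℱ`, associated with the family `ν`. -/
structure LusztigForm {I : Type*} (A : BCMatrix I) (C : CoMult A) (ν : I → ℕ → KQ) where
  B : A.FA →ₗ[KQ] A.FA →ₗ[KQ] KQ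
  symm : ∀ x y, B x y = B y x
  wt : ∀ β γ : I →₀ ℤ, β ≠ γ → ∀ x ∈ A.weightSpace β, ∀ y ∈ A.weightSpace γ, B x y = 0
  one_one : B 1 1 = 1
  gen_gen : ∀ i l, A.validIdx i l → B (A.gen i l) (A.gen i l) = ν i l
  mul_compat : ∀ x y z,
    B x (y * z) = LinearMap.BilinForm.tmul B B (C.rho x) (y ⊗ₜ[KQ] z)

/-- The radical `ℛ` of the bilinear form. -/
def LusztigForm.radical {I : Type*} {A : BCMatrix I} {C : CoMult A} {ν : I → ℕ → KQ}
    (L : LusztigForm A C ν) : Submodule KQ A.FA :=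
  LinearMap.ker L.B

namespace BCMatrix

/-- "Terms of bidegree not in `Q₋ × {-lα_i}`": the span of the tensors whose second
component is homogeneous of degree `≠ -lα_i`. -/
def errLow {I : Type*} (A : BCMatrix I) (i : I) (l : ℕ) : Submodule KQ (A.FA ⊗[KQ] A.FA) :=
  Submodule.span KQ {t | ∃ γ : I →₀ ℤ, γ ≠ Finsupp.single i (-(l : ℤ)) ∧
    ∃ u : A.FA, ∃ v ∈ A.weightSpace γ, t = u ⊗ₜ[KQ] v}

/-- "Terms of bidegree not in `{-lα_i} × Q₋`": the span of the tensors whose first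
component is homogeneous of degree `≠ -lα_i`. -/
def errUp {I : Type*} (A : BCMatrix I) (i : I) (l : ℕ) : Submodule KQ (A.FA ⊗[KQ] A.FA) :=
  Submodule.span KQ {t | ∃ γ : I →₀ ℤ, γ ≠ Finsupp.single i (-(l : ℤ)) ∧
    ∃ u ∈ A.weightSpace γ, ∃ v : A.FA, t = u ⊗ₜ[KQ] v}

end BCMatrix

open scoped Classical

/-- The component maps `ϱ_{i,l}, ϱ^{i,l}` (for `i ∈ I^im`, components indexed by the
compositions of `l`) and `ϱ_i, ϱ^i` (for `i ∈ I^re`) of the comultiplication `ϱ`. -/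
structure RhoComponents {I : Type*} (A : BCMatrix I) (C : CoMult A) where
  low : (i : I) → (l : ℕ) → A.FA →ₗ[KQ] (Composition l → A.FA)
  up : (i : I) → (l : ℕ) → A.FA →ₗ[KQ] (Composition l → A.FA)
  low_spec : ∀ i l, A.a i i ≤ 0 → 1 ≤ l → ∀ x : A.FA,
    C.rho x - ∑ c : Composition l, (low i l x c) ⊗ₜ[KQ] (A.fcomp i c) ∈ A.errLow i l
  up_spec : ∀ i l, A.a i i ≤ 0 → 1 ≤ l → ∀ x : A.FA,
    C.rho x - ∑ c : Composition l, (A.fcomp i c) ⊗ₜ[KQ] (up i l x c) ∈ A.errUp i l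
  rlow : I → A.FA →ₗ[KQ] A.FA
  rup : I → A.FA →ₗ[KQ] A.FA
  rlow_one : ∀ i, A.a i i = 2 → rlow i 1 = 0
  rup_one : ∀ i, A.a i i = 2 → rup i 1 = 0
  rlow_gen : ∀ i j k, A.a i i = 2 → A.validIdx j k →
    rlow i (A.gen j k) = if j = i ∧ k = 1 then 1 else 0
  rup_gen : ∀ i j k, A.a i i = 2 → A.validIdx j k →
    rup i (A.gen j k) = if j = i ∧ k = 1 then 1 else 0
  rlow_mul : ∀ i, A.a i i = 2 → ∀ (β : I →₀ ℤ) (x y : A.FA), y ∈ A.weightSpace β →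
    rlow i (x * y) =
      (qq ^ (A.rootForm β (Finsupp.single i 1))) • (rlow i x * y) + x * rlow i y
  rup_mul : ∀ i, A.a i i = 2 → ∀ (β : I →₀ ℤ) (x y : A.FA), x ∈ A.weightSpace β →
    rup i (x * y) =
      rup i x * y + (qq ^ (A.rootForm β (Finsupp.single i 1))) • (x * rup i y)


/-! For a real index `i`, `ϱ(x) ≡ x ⊗ 1 + ϱ_i(x) ⊗ f_{i1}` modulo the span of bihomogeneous
tensors whose second degree lies in `Q₋ ∖ {0, -α_i}`. Since that set of degrees is a lower set,
these tensors form a two-sided ideal for the twisted product, so the congruence passes from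
generators to products: of the four cross terms, one has second degree `-2α_i` and the other
three reproduce the derivation rule defining `ϱ_i`. Pairing with `y ⊗ f_{i1}` kills the error by
orthogonality of weight spaces, which gives (a); (b) is the same pairing applied to the
decomposition defining `ϱ_{i,l}`, and the mirror argument handles `ϱ^i` and `ϱ^{i,l}`. For (c)
the radical is tested on words: the empty word pairs to zero with `x` because `|x| ≠ 0`, and a
nonempty word ends (or starts) with a generator, so (a) and (b) turn its pairing with `x` into
pairings with the components of `ϱ_{i,l}(x)`. -/

open Finsupp TensorProduct

theorem FreeAlgebra.span_range_list_prod_ι (R X : Type*) [CommSemiring R] :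
    Submodule.span R (Set.range fun w : List X => (w.map (FreeAlgebra.ι R)).prod) = ⊤ := by
  have hwords : Set.range (fun w : List X => (w.map (FreeAlgebra.ι R)).prod) =
      (Submonoid.closure (Set.range (FreeAlgebra.ι R (X := X))) : Set (FreeAlgebra R X)) := by
    rw [← FreeMonoid.mrange_lift]
    ext x
    simp only [Set.mem_range, SetLike.mem_coe, MonoidHom.mem_mrange, FreeMonoid.lift_apply]
    exact ⟨fun ⟨w, hw⟩ => ⟨FreeMonoid.ofList w, hw⟩, fun ⟨w, hw⟩ => ⟨w.toList, hw⟩⟩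
  rw [hwords, ← Algebra.adjoin_eq_span, FreeAlgebra.adjoin_range_ι, Algebra.top_toSubmodule]

theorem TensorProduct.span_image2_tmul_eq_top {R M N : Type*} [CommSemiring R]
    [AddCommMonoid M] [AddCommMonoid N] [Module R M] [Module R N] {s : Set M} {t : Set N}
    (hs : Submodule.span R s = ⊤) (ht : Submodule.span R t = ⊤) :
    Submodule.span R (Set.image2 (· ⊗ₜ[R] ·) s t) = ⊤ := by
  have h := Submodule.map₂_span_span R (TensorProduct.mk R M N) s t
  rw [hs, ht, TensorProduct.map₂_mk_top_top_eq_top] at h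
  exact h.symm

namespace BCMatrix

variable {I : Type*} (A : BCMatrix I)

def word (w : List A.Iinf) : A.FA := (w.map (FreeAlgebra.ι KQ)).prod

theorem span_range_word : Submodule.span KQ (Set.range A.word) = ⊤ :=
  FreeAlgebra.span_range_list_prod_ι KQ A.Iinf

theorem word_nil : A.word [] = 1 := rfl

theorem word_cons (p : A.Iinf) (w : List A.Iinf) :
    A.word (p :: w) = FreeAlgebra.ι KQ p * A.word w := rfl

theorem word_append (w w' : List A.Iinf) : A.word (w ++ w') = A.word w * A.word w' := by
  simp [word]

theorem wordDeg_nil : A.wordDeg [] = 0 := rfl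

theorem wordDeg_cons (p : A.Iinf) (w : List A.Iinf) :
    A.wordDeg (p :: w) = single p.1.1 (-(p.1.2 : ℤ)) + A.wordDeg w := by
  simp [wordDeg]

theorem wordDeg_append (w w' : List A.Iinf) :
    A.wordDeg (w ++ w') = A.wordDeg w + A.wordDeg w' := by
  simp [wordDeg]

theorem wordDeg_nonpos (w : List A.Iinf) : A.wordDeg w ≤ 0 := by
  induction w with
  | nil => exact le_rfl
  | cons p w ih =>
    rw [wordDeg_cons]
    exact add_nonpos (single_nonpos.mpr (by omega)) ih

theorem word_mem_weightSpace (w : List A.Iinf) : A.word w ∈ A.weightSpace (A.wordDeg w) :=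
  Submodule.subset_span ⟨w, rfl, rfl⟩

theorem one_mem_weightSpace : (1 : A.FA) ∈ A.weightSpace 0 :=
  A.word_mem_weightSpace []

theorem mul_mem_weightSpace {β γ : I →₀ ℤ} {x y : A.FA} (hx : x ∈ A.weightSpace β)
    (hy : y ∈ A.weightSpace γ) : x * y ∈ A.weightSpace (β + γ) := by
  have hle : A.weightSpace β * A.weightSpace γ ≤ A.weightSpace (β + γ) := by
    rw [weightSpace, weightSpace, Submodule.span_mul_span]
    refine Submodule.span_mono ?_
    rintro _ ⟨_, ⟨w, rfl, rfl⟩, _, ⟨w', rfl, rfl⟩, rfl⟩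
    exact ⟨w ++ w', A.wordDeg_append w w', (A.word_append w w').symm⟩
  exact hle (Submodule.mul_mem_mul hx hy)

theorem eq_one_of_validIdx {i : I} {l : ℕ} (h : A.validIdx i l) (hi : A.a i i = 2) : l = 1 := by
  rcases h with ⟨-, h⟩ | ⟨h, -⟩
  · exact h
  · omega

theorem gen_eq_ι {i : I} {l : ℕ} (h : A.validIdx i l) :
    A.gen i l = FreeAlgebra.ι KQ (X := A.Iinf) ⟨(i, l), h⟩ := by
  unfold gen
  exact dif_pos h

theorem gen_zero (i : I) : A.gen i 0 = 1 := by
  have : ¬ A.validIdx i 0 := by rintro (⟨-, h⟩ | ⟨-, h⟩) <;> omega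
  rw [gen, dif_neg this, if_pos rfl]

theorem ι_mem_weightSpace (p : A.Iinf) :
    FreeAlgebra.ι KQ p ∈ A.weightSpace (single p.1.1 (-(p.1.2 : ℤ))) := by
  have h := A.word_mem_weightSpace [p]
  rwa [wordDeg_cons, wordDeg_nil, add_zero, word_cons, word_nil, mul_one] at h

theorem gen_mem_weightSpace (i : I) (l : ℕ) :
    A.gen i l ∈ A.weightSpace (single i (-(l : ℤ))) := by
  by_cases h : A.validIdx i l
  · rw [A.gen_eq_ι h]
    exact A.ι_mem_weightSpace ⟨(i, l), h⟩
  · rcases Nat.eq_zero_or_pos l with rfl | hl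
    · simpa [A.gen_zero] using A.one_mem_weightSpace
    · rw [gen, dif_neg h, if_neg hl.ne']
      exact Submodule.zero_mem _

theorem gen_one_mem_weightSpace (i : I) : A.gen i 1 ∈ A.weightSpace (single i (-1)) := by
  simpa using A.gen_mem_weightSpace i 1

theorem ite_mem_weightSpace (i j : I) (k : ℕ) :
    (if j = i ∧ k = 1 then (1 : A.FA) else 0) ∈
      A.weightSpace (single j (-(k : ℤ)) + single i 1) := by
  split_ifs with hc
  · obtain ⟨rfl, rfl⟩ := hc
    simpa using A.one_mem_weightSpace
  · exact Submodule.zero_mem _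

theorem word_induction {P : (I →₀ ℤ) → A.FA → Prop} (one : P 0 1)
    (gen : ∀ j k, A.validIdx j k → P (single j (-(k : ℤ))) (A.gen j k))
    (mul : ∀ {β γ x y}, x ∈ A.weightSpace β → y ∈ A.weightSpace γ → P β x → P γ y →
      P (β + γ) (x * y))
    (w : List A.Iinf) : P (A.wordDeg w) (A.word w) := by
  induction w with
  | nil => exact one
  | cons p w ih =>
    rw [word_cons, wordDeg_cons]
    obtain ⟨⟨j, k⟩, h⟩ := p
    rw [← A.gen_eq_ι h]
    exact mul (A.gen_mem_weightSpace j k) (A.word_mem_weightSpace w) (gen j k h) ih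

theorem rootForm_zero_left (β : I →₀ ℤ) : A.rootForm 0 β = 0 := by
  simp [rootForm]

theorem rootForm_zero_right (β : I →₀ ℤ) : A.rootForm β 0 = 0 := by
  simp [rootForm]

theorem rootForm_comm (β γ : I →₀ ℤ) : A.rootForm β γ = A.rootForm γ β := by
  rw [rootForm, rootForm, Finsupp.sum_comm]
  refine Finsupp.sum_congr fun j _ => Finsupp.sum_congr fun i _ => ?_
  rw [A.symmetrizable i j]
  ring

theorem rootForm_neg_right (β γ : I →₀ ℤ) : A.rootForm β (-γ) = -A.rootForm β γ := by
  simp only [rootForm]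
  rw [← Finsupp.sum_neg]
  refine Finsupp.sum_congr fun i _ => ?_
  rw [Finsupp.sum_neg_index (by simp), ← Finsupp.sum_neg]
  refine Finsupp.sum_congr fun j _ => ?_
  ring

theorem rootForm_neg_left (β γ : I →₀ ℤ) : A.rootForm (-β) γ = -A.rootForm β γ := by
  rw [rootForm_comm, rootForm_neg_right, rootForm_comm]

/-- `Q₋ ∖ {0, -α_i}`: a degree `γ ≤ 0` with `-α_i ≤ γ` is `0` or `-α_i`. -/
def negConeOff (i : I) : Set (I →₀ ℤ) := Set.Iic 0 ∩ (Set.Ici (single i (-1)))ᶜ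

theorem isLowerSet_negConeOff (i : I) : IsLowerSet (negConeOff i) :=
  (isLowerSet_Iic 0).inter (isUpperSet_Ici _).compl

theorem ne_of_mem_negConeOff {i : I} {γ : I →₀ ℤ} (h : γ ∈ negConeOff i) :
    γ ≠ single i (-1) := by
  rintro rfl
  exact h.2 (Set.mem_Ici.mpr le_rfl)

theorem single_mem_negConeOff {i j : I} (hji : j ≠ i) {n : ℕ} (hn : 0 < n) :
    single j (-(n : ℤ)) ∈ negConeOff i := by
  refine ⟨single_nonpos.mpr (by omega), fun h => ?_⟩
  have := Finsupp.le_def.mp h j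
  simp [hji.symm] at this
  omega

theorem single_add_single_mem_negConeOff (i : I) :
    single i (-1) + single i (-1) ∈ negConeOff i := by
  have hneg : single i (-1 : ℤ) ≤ 0 := single_nonpos.mpr (by omega)
  refine ⟨Set.mem_Iic.mpr (add_nonpos hneg hneg), fun h => ?_⟩
  have := Finsupp.le_def.mp h i
  simp at this

def bihomSpan (S T : Set (I →₀ ℤ)) : Submodule KQ (A.FA ⊗[KQ] A.FA) :=
  Submodule.span KQ {t | ∃ β ∈ S, ∃ γ ∈ T, ∃ u ∈ A.weightSpace β, ∃ v ∈ A.weightSpace γ,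
    u ⊗ₜ v = t}

theorem bihomSpan_negConeOff_le_errLow (i : I) :
    A.bihomSpan Set.univ (negConeOff i) ≤ A.errLow i 1 :=
  Submodule.span_le.mpr fun _ ⟨_, _, γ, hγ, u, _, v, hv, ht⟩ =>
    Submodule.subset_span ⟨γ, by simpa using ne_of_mem_negConeOff hγ, u, v, hv, ht.symm⟩

theorem bihomSpan_negConeOff_le_errUp (i : I) :
    A.bihomSpan (negConeOff i) Set.univ ≤ A.errUp i 1 :=
  Submodule.span_le.mpr fun _ ⟨γ, hγ, _, _, u, hu, v, _, ht⟩ =>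
    Submodule.subset_span ⟨γ, by simpa using ne_of_mem_negConeOff hγ, u, hu, v, ht.symm⟩

variable {A}

theorem tmul_mem_bihomSpan {S T : Set (I →₀ ℤ)} {β γ : I →₀ ℤ} {u v : A.FA} (hβ : β ∈ S)
    (hγ : γ ∈ T) (hu : u ∈ A.weightSpace β) (hv : v ∈ A.weightSpace γ) :
    u ⊗ₜ v ∈ A.bihomSpan S T :=
  Submodule.subset_span ⟨β, hβ, γ, hγ, u, hu, v, hv, rfl⟩

theorem map_mem_of_forall_word_tmul_word {M : Type*} [AddCommGroup M] [Module KQ M]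
    (f : A.FA ⊗[KQ] A.FA →ₗ[KQ] M) {p : Submodule KQ M}
    (h : ∀ w w', f (A.word w ⊗ₜ A.word w') ∈ p) (t : A.FA ⊗[KQ] A.FA) : f t ∈ p := by
  have hle : Submodule.span KQ (Set.image2 (· ⊗ₜ[KQ] ·) (Set.range A.word) (Set.range A.word))
      ≤ p.comap f :=
    Submodule.span_le.mpr (by rintro _ ⟨_, ⟨w, rfl⟩, _, ⟨w', rfl⟩, rfl⟩; exact h w w')
  rw [TensorProduct.span_image2_tmul_eq_top A.span_range_word A.span_range_word] at hle
  exact hle Submodule.mem_top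

end BCMatrix

open BCMatrix

namespace CoMult

variable {I : Type*} {A : BCMatrix I} (C : CoMult A)

theorem tmul_tmul_mem_bihomSpan {S T : Set (I →₀ ℤ)} {δ ε β γ : I →₀ ℤ} {a b u v : A.FA}
    (ha : a ∈ A.weightSpace δ) (hb : b ∈ A.weightSpace ε) (hu : u ∈ A.weightSpace β)
    (hv : v ∈ A.weightSpace γ) (hS : δ + β ∈ S) (hT : ε + γ ∈ T) :
    C.tmul (a ⊗ₜ b) (u ⊗ₜ v) ∈ A.bihomSpan S T := by
  rw [C.tmul_spec ε β a b u v hb hu]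
  exact Submodule.smul_mem _ _
    (tmul_mem_bihomSpan hS hT (A.mul_mem_weightSpace ha hu) (A.mul_mem_weightSpace hb hv))

variable {S T : Set (I →₀ ℤ)}

theorem tmul_mem_bihomSpan_right (hS : IsLowerSet S) (hT : IsLowerSet T)
    (t : A.FA ⊗[KQ] A.FA) {e : A.FA ⊗[KQ] A.FA}
    (he : e ∈ A.bihomSpan S T) : C.tmul t e ∈ A.bihomSpan S T := by
  refine (Submodule.span_le.mpr ?_ : A.bihomSpan S T ≤ (A.bihomSpan S T).comap (C.tmul t)) he
  rintro _ ⟨β, hβ, γ, hγ, u, hu, v, hv, rfl⟩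
  show C.tmul.flip (u ⊗ₜ v) t ∈ A.bihomSpan S T
  refine map_mem_of_forall_word_tmul_word (C.tmul.flip (u ⊗ₜ v)) (fun w w' => ?_) t
  exact C.tmul_tmul_mem_bihomSpan (A.word_mem_weightSpace w) (A.word_mem_weightSpace w') hu hv
    (hS (add_le_of_nonpos_left (A.wordDeg_nonpos w)) hβ)
    (hT (add_le_of_nonpos_left (A.wordDeg_nonpos w')) hγ)

theorem tmul_mem_bihomSpan_left (hS : IsLowerSet S) (hT : IsLowerSet T)
    (t : A.FA ⊗[KQ] A.FA) {e : A.FA ⊗[KQ] A.FA}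
    (he : e ∈ A.bihomSpan S T) : C.tmul e t ∈ A.bihomSpan S T := by
  refine (Submodule.span_le.mpr ?_ :
    A.bihomSpan S T ≤ (A.bihomSpan S T).comap (C.tmul.flip t)) he
  rintro _ ⟨β, hβ, γ, hγ, u, hu, v, hv, rfl⟩
  show C.tmul (u ⊗ₜ v) t ∈ A.bihomSpan S T
  refine map_mem_of_forall_word_tmul_word (C.tmul (u ⊗ₜ v)) (fun w w' => ?_) t
  exact C.tmul_tmul_mem_bihomSpan hu hv (A.word_mem_weightSpace w) (A.word_mem_weightSpace w')
    (hS (add_le_of_nonpos_right (A.wordDeg_nonpos w)) hβ)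
    (hT (add_le_of_nonpos_right (A.wordDeg_nonpos w')) hγ)

theorem tmul_smodEq (hS : IsLowerSet S) (hT : IsLowerSet T)
    {a a' b b' : A.FA ⊗[KQ] A.FA} (ha : a ≡ a' [SMOD A.bihomSpan S T])
    (hb : b ≡ b' [SMOD A.bihomSpan S T]) :
    C.tmul a b ≡ C.tmul a' b' [SMOD A.bihomSpan S T] := by
  rw [SModEq.sub_mem] at ha hb ⊢
  have hsplit : C.tmul a b - C.tmul a' b' = C.tmul (a - a') b + C.tmul a' (b - b') := by
    simp only [map_sub, LinearMap.sub_apply]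
    abel
  rw [hsplit]
  exact add_mem (C.tmul_mem_bihomSpan_left hS hT b ha) (C.tmul_mem_bihomSpan_right hS hT a' hb)

theorem rho_gen_one {i : I} (h : A.validIdx i 1) :
    C.rho (A.gen i 1) = 1 ⊗ₜ A.gen i 1 + A.gen i 1 ⊗ₜ 1 := by
  rw [C.rho_gen i 1 h, Finset.sum_range_succ, Finset.sum_range_one]
  simp [A.gen_zero]

theorem rho_gen_smodEq_low {i j : I} (hji : j ≠ i) {k : ℕ} (h : A.validIdx j k) :
    C.rho (A.gen j k) ≡ A.gen j k ⊗ₜ 1 [SMOD A.bihomSpan Set.univ (negConeOff i)] := by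
  rw [C.rho_gen j k h, Finset.sum_range_succ, SModEq.sub_mem]
  simp only [sub_self, mul_zero, neg_zero, zpow_zero, one_smul, Nat.sub_self, A.gen_zero,
    add_sub_cancel_right]
  refine Submodule.sum_mem _ fun m hm => Submodule.smul_mem _ _ ?_
  exact tmul_mem_bihomSpan (Set.mem_univ _)
    (single_mem_negConeOff hji (by simp at hm; omega))
    (A.gen_mem_weightSpace j m) (A.gen_mem_weightSpace j (k - m))

theorem rho_gen_smodEq_up {i j : I} (hji : j ≠ i) {k : ℕ} (h : A.validIdx j k) :
    C.rho (A.gen j k) ≡ 1 ⊗ₜ A.gen j k [SMOD A.bihomSpan (negConeOff i) Set.univ] := by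
  rw [C.rho_gen j k h, Finset.sum_range_succ', SModEq.sub_mem]
  simp only [CharP.cast_eq_zero, zero_mul, neg_zero, zpow_zero, one_smul, A.gen_zero,
    Nat.sub_zero, add_sub_cancel_right]
  refine Submodule.sum_mem _ fun m _ => Submodule.smul_mem _ _ ?_
  exact tmul_mem_bihomSpan (single_mem_negConeOff hji m.succ_pos) (Set.mem_univ _)
    (A.gen_mem_weightSpace j (m + 1)) (A.gen_mem_weightSpace j (k - (m + 1)))

end CoMult

namespace RhoComponents

variable {I : Type*} {A : BCMatrix I} {C : CoMult A} (R : RhoComponents A C) {i : I}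

theorem rlow_mem_weightSpace (hi : A.a i i = 2) {β : I →₀ ℤ} {x : A.FA}
    (hx : x ∈ A.weightSpace β) : R.rlow i x ∈ A.weightSpace (β + single i 1) := by
  induction hx using Submodule.span_induction with
  | mem _ hw =>
    obtain ⟨w, rfl, rfl⟩ := hw
    refine A.word_induction (P := fun β x => R.rlow i x ∈ A.weightSpace (β + single i 1))
      (by simp [R.rlow_one i hi])
      (fun j k h => by rw [R.rlow_gen i j k hi h]; exact A.ite_mem_weightSpace i j k)
      (fun {β γ x y} hx hy hrx hry => ?_) w
    rw [R.rlow_mul i hi γ x y hy]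
    refine add_mem (Submodule.smul_mem _ _ ?_) ?_
    · rw [add_right_comm]
      exact A.mul_mem_weightSpace hrx hy
    · rw [add_assoc]
      exact A.mul_mem_weightSpace hx hry
  | zero => simp
  | add x y _ _ hx hy => simpa using add_mem hx hy
  | smul c x _ hx => simpa using Submodule.smul_mem _ c hx

theorem rup_mem_weightSpace (hi : A.a i i = 2) {β : I →₀ ℤ} {x : A.FA}
    (hx : x ∈ A.weightSpace β) : R.rup i x ∈ A.weightSpace (β + single i 1) := by
  induction hx using Submodule.span_induction with
  | mem _ hw =>
    obtain ⟨w, rfl, rfl⟩ := hw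
    refine A.word_induction (P := fun β x => R.rup i x ∈ A.weightSpace (β + single i 1))
      (by simp [R.rup_one i hi])
      (fun j k h => by rw [R.rup_gen i j k hi h]; exact A.ite_mem_weightSpace i j k)
      (fun {β γ x y} hx hy hrx hry => ?_) w
    rw [R.rup_mul i hi β x y hx]
    refine add_mem ?_ (Submodule.smul_mem _ _ ?_)
    · rw [add_right_comm]
      exact A.mul_mem_weightSpace hrx hy
    · rw [add_assoc]
      exact A.mul_mem_weightSpace hx hry
  | zero => simp
  | add x y _ _ hx hy => simpa using add_mem hx hy
  | smul c x _ hx => simpa using Submodule.smul_mem _ c hx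

theorem rho_mul_smodEq_low (hi : A.a i i = 2) {β γ : I →₀ ℤ} {x y : A.FA}
    (hx : x ∈ A.weightSpace β) (hy : y ∈ A.weightSpace γ)
    (hρx : C.rho x ≡ x ⊗ₜ 1 + R.rlow i x ⊗ₜ A.gen i 1 [SMOD A.bihomSpan Set.univ (negConeOff i)])
    (hρy : C.rho y ≡ y ⊗ₜ 1 + R.rlow i y ⊗ₜ A.gen i 1 [SMOD A.bihomSpan Set.univ (negConeOff i)]) :
    C.rho (x * y) ≡ (x * y) ⊗ₜ 1 + R.rlow i (x * y) ⊗ₜ A.gen i 1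
      [SMOD A.bihomSpan Set.univ (negConeOff i)] := by
  have hf := A.gen_one_mem_weightSpace i
  have hrx := R.rlow_mem_weightSpace hi hx
  have hry := R.rlow_mem_weightSpace hi hy
  rw [C.rho_mul]
  refine (C.tmul_smodEq isLowerSet_univ (isLowerSet_negConeOff i) hρx hρy).trans ?_
  rw [SModEq.sub_mem]
  have hq : A.rootForm (single i (-1)) γ = -A.rootForm γ (single i 1) := by
    rw [single_neg, A.rootForm_neg_left, A.rootForm_comm]
  have hexp : C.tmul (x ⊗ₜ 1 + R.rlow i x ⊗ₜ A.gen i 1) (y ⊗ₜ 1 + R.rlow i y ⊗ₜ A.gen i 1)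
      - ((x * y) ⊗ₜ 1 + R.rlow i (x * y) ⊗ₜ A.gen i 1)
      = C.tmul (R.rlow i x ⊗ₜ A.gen i 1) (R.rlow i y ⊗ₜ A.gen i 1) := by
    simp only [map_add, LinearMap.add_apply]
    rw [C.tmul_spec 0 γ _ _ _ _ A.one_mem_weightSpace hy,
      C.tmul_spec 0 _ _ _ _ _ A.one_mem_weightSpace hry,
      C.tmul_spec _ γ _ _ _ _ hf hy, R.rlow_mul i hi γ x y hy, hq]
    simp only [A.rootForm_zero_left, neg_zero, neg_neg, zpow_zero, one_smul, mul_one, one_mul,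
      add_tmul, smul_tmul']
    abel
  rw [hexp]
  exact C.tmul_tmul_mem_bihomSpan hrx hf hry hf (Set.mem_univ _)
    (single_add_single_mem_negConeOff i)

theorem rho_mul_smodEq_up (hi : A.a i i = 2) {β γ : I →₀ ℤ} {x y : A.FA}
    (hx : x ∈ A.weightSpace β) (hy : y ∈ A.weightSpace γ)
    (hρx : C.rho x ≡ 1 ⊗ₜ x + A.gen i 1 ⊗ₜ R.rup i x [SMOD A.bihomSpan (negConeOff i) Set.univ])
    (hρy : C.rho y ≡ 1 ⊗ₜ y + A.gen i 1 ⊗ₜ R.rup i y [SMOD A.bihomSpan (negConeOff i) Set.univ]) :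
    C.rho (x * y) ≡ 1 ⊗ₜ (x * y) + A.gen i 1 ⊗ₜ R.rup i (x * y)
      [SMOD A.bihomSpan (negConeOff i) Set.univ] := by
  have hf := A.gen_one_mem_weightSpace i
  have hrx := R.rup_mem_weightSpace hi hx
  have hry := R.rup_mem_weightSpace hi hy
  rw [C.rho_mul]
  refine (C.tmul_smodEq (isLowerSet_negConeOff i) isLowerSet_univ hρx hρy).trans ?_
  rw [SModEq.sub_mem]
  have hq : A.rootForm β (single i (-1)) = -A.rootForm β (single i 1) := by
    rw [single_neg, A.rootForm_neg_right]
  have hexp : C.tmul (1 ⊗ₜ x + A.gen i 1 ⊗ₜ R.rup i x) (1 ⊗ₜ y + A.gen i 1 ⊗ₜ R.rup i y)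
      - (1 ⊗ₜ (x * y) + A.gen i 1 ⊗ₜ R.rup i (x * y))
      = C.tmul (A.gen i 1 ⊗ₜ R.rup i x) (A.gen i 1 ⊗ₜ R.rup i y) := by
    simp only [map_add, LinearMap.add_apply]
    rw [C.tmul_spec β 0 _ _ _ _ hx A.one_mem_weightSpace,
      C.tmul_spec β _ _ _ _ _ hx hf,
      C.tmul_spec _ 0 _ _ _ _ hrx A.one_mem_weightSpace, R.rup_mul i hi β x y hx, hq]
    simp only [A.rootForm_zero_right, neg_zero, neg_neg, zpow_zero, one_smul, mul_one, one_mul,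
      tmul_add, tmul_smul]
    abel
  rw [hexp]
  exact C.tmul_tmul_mem_bihomSpan hf hrx hf hry (single_add_single_mem_negConeOff i)
    (Set.mem_univ _)

theorem rho_smodEq_low (hi : A.a i i = 2) (x : A.FA) :
    C.rho x ≡ x ⊗ₜ 1 + R.rlow i x ⊗ₜ A.gen i 1 [SMOD A.bihomSpan Set.univ (negConeOff i)] := by
  have hx : x ∈ Submodule.span KQ (Set.range A.word) := A.span_range_word ▸ Submodule.mem_top
  induction hx using Submodule.span_induction with
  | mem _ hw =>
    obtain ⟨w, rfl⟩ := hw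
    refine A.word_induction (P := fun _ x => C.rho x ≡ x ⊗ₜ 1 + R.rlow i x ⊗ₜ A.gen i 1
      [SMOD A.bihomSpan Set.univ (negConeOff i)]) ?_ (fun j k h => ?_)
      (fun hx hy => R.rho_mul_smodEq_low hi hx hy) w
    · simp [C.rho_one, R.rlow_one i hi, SModEq.refl]
    · rw [R.rlow_gen i j k hi h]
      split_ifs with hc
      · obtain ⟨rfl, rfl⟩ := hc
        rw [C.rho_gen_one h, add_comm]
      · have hji : j ≠ i := fun hji => hc ⟨hji, A.eq_one_of_validIdx h (hji ▸ hi)⟩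
        simpa using C.rho_gen_smodEq_low hji h
  | zero => simp [SModEq.refl]
  | add x y _ _ hx hy => simpa only [map_add, add_tmul, add_add_add_comm] using hx.add hy
  | smul c x _ hx => simpa only [map_smul, smul_tmul', smul_add] using hx.smul c

theorem rho_smodEq_up (hi : A.a i i = 2) (x : A.FA) :
    C.rho x ≡ 1 ⊗ₜ x + A.gen i 1 ⊗ₜ R.rup i x [SMOD A.bihomSpan (negConeOff i) Set.univ] := by
  have hx : x ∈ Submodule.span KQ (Set.range A.word) := A.span_range_word ▸ Submodule.mem_top
  induction hx using Submodule.span_induction with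
  | mem _ hw =>
    obtain ⟨w, rfl⟩ := hw
    refine A.word_induction (P := fun _ x => C.rho x ≡ 1 ⊗ₜ x + A.gen i 1 ⊗ₜ R.rup i x
      [SMOD A.bihomSpan (negConeOff i) Set.univ]) ?_ (fun j k h => ?_)
      (fun hx hy => R.rho_mul_smodEq_up hi hx hy) w
    · simp [C.rho_one, R.rup_one i hi, SModEq.refl]
    · rw [R.rup_gen i j k hi h]
      split_ifs with hc
      · obtain ⟨rfl, rfl⟩ := hc
        rw [C.rho_gen_one h]
      · have hji : j ≠ i := fun hji => hc ⟨hji, A.eq_one_of_validIdx h (hji ▸ hi)⟩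
        simpa using C.rho_gen_smodEq_up hji h
  | zero => simp [SModEq.refl]
  | add x y _ _ hx hy => simpa only [map_add, tmul_add, add_add_add_comm] using hx.add hy
  | smul c x _ hx => simpa only [map_smul, tmul_smul, smul_add] using hx.smul c

end RhoComponents

namespace LusztigForm

open LinearMap.BilinForm (tensorDistrib_tmul)

variable {I : Type*} {A : BCMatrix I} {C : CoMult A} {ν : I → ℕ → KQ} (L : LusztigForm A C ν)

theorem apply_mul_gen_of_smodEq {i : I} {l : ℕ} {x : A.FA} {s : A.FA ⊗[KQ] A.FA}
    (h : C.rho x ≡ s [SMOD A.errLow i l]) (y : A.FA) :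
    L.B x (y * A.gen i l) = LinearMap.BilinForm.tmul L.B L.B s (y ⊗ₜ A.gen i l) := by
  have hle : A.errLow i l ≤
      LinearMap.ker ((LinearMap.BilinForm.tmul L.B L.B).flip (y ⊗ₜ A.gen i l)) := by
    refine Submodule.span_le.mpr ?_
    rintro _ ⟨γ, hγ, u, v, hv, rfl⟩
    rw [SetLike.mem_coe, LinearMap.mem_ker, LinearMap.flip_apply, tensorDistrib_tmul,
      L.wt _ _ hγ v hv _ (A.gen_mem_weightSpace i l), zero_smul]
  have hzero := hle (SModEq.sub_mem.mp h)
  rwa [LinearMap.mem_ker, map_sub, sub_eq_zero, LinearMap.flip_apply, LinearMap.flip_apply,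
    ← L.mul_compat] at hzero

theorem apply_gen_mul_of_smodEq {i : I} {l : ℕ} {x : A.FA} {s : A.FA ⊗[KQ] A.FA}
    (h : C.rho x ≡ s [SMOD A.errUp i l]) (y : A.FA) :
    L.B x (A.gen i l * y) = LinearMap.BilinForm.tmul L.B L.B s (A.gen i l ⊗ₜ y) := by
  have hle : A.errUp i l ≤
      LinearMap.ker ((LinearMap.BilinForm.tmul L.B L.B).flip (A.gen i l ⊗ₜ y)) := by
    refine Submodule.span_le.mpr ?_
    rintro _ ⟨γ, hγ, u, hu, v, rfl⟩
    rw [SetLike.mem_coe, LinearMap.mem_ker, LinearMap.flip_apply, tensorDistrib_tmul,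
      L.wt _ _ hγ u hu _ (A.gen_mem_weightSpace i l), smul_zero]
  have hzero := hle (SModEq.sub_mem.mp h)
  rwa [LinearMap.mem_ker, map_sub, sub_eq_zero, LinearMap.flip_apply, LinearMap.flip_apply,
    ← L.mul_compat] at hzero

theorem apply_one_gen_one (i : I) : L.B 1 (A.gen i 1) = 0 :=
  L.wt 0 _ (single_ne_zero.mpr (by norm_num)).symm 1 A.one_mem_weightSpace _
    (A.gen_one_mem_weightSpace i)

theorem apply_eq_zero_of_mem_radical {x : A.FA} (hx : x ∈ L.radical) (y : A.FA) :
    L.B y x = 0 := by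
  rw [L.symm]
  exact LinearMap.congr_fun (LinearMap.mem_ker.mp hx) y

variable (R : RhoComponents A C) {i : I}

theorem apply_mul_gen_re (hi : A.a i i = 2) (x y : A.FA) :
    L.B (y * A.gen i 1) x = L.B (A.gen i 1) (A.gen i 1) * L.B y (R.rlow i x) := by
  rw [L.symm, L.apply_mul_gen_of_smodEq
      ((R.rho_smodEq_low hi x).mono (A.bihomSpan_negConeOff_le_errLow i)),
    map_add, LinearMap.add_apply, tensorDistrib_tmul, tensorDistrib_tmul, L.apply_one_gen_one,
    zero_smul, zero_add, smul_eq_mul, L.symm (R.rlow i x)]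

theorem apply_gen_mul_re (hi : A.a i i = 2) (x y : A.FA) :
    L.B (A.gen i 1 * y) x = L.B (A.gen i 1) (A.gen i 1) * L.B y (R.rup i x) := by
  rw [L.symm, L.apply_gen_mul_of_smodEq
      ((R.rho_smodEq_up hi x).mono (A.bihomSpan_negConeOff_le_errUp i)),
    map_add, LinearMap.add_apply, tensorDistrib_tmul, tensorDistrib_tmul, L.apply_one_gen_one,
    smul_zero, zero_add, smul_eq_mul, mul_comm, L.symm (R.rup i x)]

theorem apply_mul_gen_im {l : ℕ} (hi : A.a i i ≤ 0) (hl : 1 ≤ l) (x y : A.FA) :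
    L.B (y * A.gen i l) x =
      ∑ c : Composition l, L.B (A.gen i l) (A.fcomp i c) * L.B y (R.low i l x c) := by
  rw [L.symm, L.apply_mul_gen_of_smodEq (SModEq.sub_mem.mpr (R.low_spec i l hi hl x)),
    map_sum, LinearMap.sum_apply]
  refine Finset.sum_congr rfl fun c _ => ?_
  rw [tensorDistrib_tmul, smul_eq_mul, L.symm (A.fcomp i c), L.symm (R.low i l x c)]

theorem apply_gen_mul_im {l : ℕ} (hi : A.a i i ≤ 0) (hl : 1 ≤ l) (x y : A.FA) :
    L.B (A.gen i l * y) x =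
      ∑ c : Composition l, L.B (A.gen i l) (A.fcomp i c) * L.B y (R.up i l x c) := by
  rw [L.symm, L.apply_gen_mul_of_smodEq (SModEq.sub_mem.mpr (R.up_spec i l hi hl x)),
    map_sum, LinearMap.sum_apply]
  refine Finset.sum_congr rfl fun c _ => ?_
  rw [tensorDistrib_tmul, smul_eq_mul, mul_comm, L.symm (A.fcomp i c), L.symm (R.up i l x c)]

theorem mem_radical_of_forall_mul_gen {β : I →₀ ℤ} (hβ : β ≠ 0) {x : A.FA}
    (hx : x ∈ A.weightSpace β) (h : ∀ y j k, A.validIdx j k → L.B (y * A.gen j k) x = 0) :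
    x ∈ L.radical := by
  refine LinearMap.mem_ker.mpr (LinearMap.ext_on_range A.span_range_word fun w => ?_)
  rw [LinearMap.zero_apply]
  rcases w.eq_nil_or_concat' with rfl | ⟨w, p, rfl⟩
  · exact L.wt β 0 hβ x hx 1 A.one_mem_weightSpace
  · rw [A.word_append, A.word_cons, A.word_nil, mul_one]
    obtain ⟨⟨j, k⟩, hjk⟩ := p
    rw [← A.gen_eq_ι hjk, L.symm]
    exact h _ j k hjk

theorem mem_radical_of_forall_gen_mul {β : I →₀ ℤ} (hβ : β ≠ 0) {x : A.FA}
    (hx : x ∈ A.weightSpace β) (h : ∀ y j k, A.validIdx j k → L.B (A.gen j k * y) x = 0) :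
    x ∈ L.radical := by
  refine LinearMap.mem_ker.mpr (LinearMap.ext_on_range A.span_range_word fun w => ?_)
  rw [LinearMap.zero_apply]
  rcases w with _ | ⟨p, w⟩
  · exact L.wt β 0 hβ x hx 1 A.one_mem_weightSpace
  · rw [A.word_cons]
    obtain ⟨⟨j, k⟩, hjk⟩ := p
    rw [← A.gen_eq_ι hjk, L.symm]
    exact h _ j k hjk

end LusztigForm

theorem radical_criterion_general {I : Type*} (A : BCMatrix I) (C : CoMult A)
    (ν : I → ℕ → KQ)
    (L : LusztigForm A C ν) (R : RhoComponents A C) :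
    -- (a)
    (∀ i, A.a i i = 2 → ∀ x y : A.FA,
      L.B (y * A.gen i 1) x = L.B (A.gen i 1) (A.gen i 1) * L.B y (R.rlow i x) ∧
      L.B (A.gen i 1 * y) x = L.B (A.gen i 1) (A.gen i 1) * L.B y (R.rup i x)) ∧
    -- (b)
    (∀ i l, A.a i i ≤ 0 → 1 ≤ l → ∀ x y : A.FA,
      L.B (y * A.gen i l) x =
        ∑ c : Composition l, L.B (A.gen i l) (A.fcomp i c) * L.B y (R.low i l x c) ∧
      L.B (A.gen i l * y) x =
        ∑ c : Composition l, L.B (A.gen i l) (A.fcomp i c) * L.B y (R.up i l x c)) ∧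
    -- (c)
    (∀ (β : I →₀ ℤ), β ≠ 0 → ∀ x ∈ A.weightSpace β,
      (((∀ i, A.a i i = 2 → R.rlow i x ∈ L.radical) ∧
        (∀ i l, A.a i i ≤ 0 → 1 ≤ l → ∀ c : Composition l, R.low i l x c ∈ L.radical)) →
          x ∈ L.radical) ∧
      (((∀ i, A.a i i = 2 → R.rup i x ∈ L.radical) ∧
        (∀ i l, A.a i i ≤ 0 → 1 ≤ l → ∀ c : Composition l, R.up i l x c ∈ L.radical)) →
          x ∈ L.radical)) := by
  refine ⟨fun i hi x y => ⟨L.apply_mul_gen_re R hi x y, L.apply_gen_mul_re R hi x y⟩,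
    fun i l hi hl x y => ⟨L.apply_mul_gen_im R hi hl x y,
      L.apply_gen_mul_im R hi hl x y⟩,
    fun β hβ x hx => ⟨fun ⟨hre, him⟩ => ?_, fun ⟨hre, him⟩ => ?_⟩⟩
  · refine L.mem_radical_of_forall_mul_gen hβ hx fun y j k hjk => ?_
    rcases hjk with ⟨hj, rfl⟩ | ⟨hj, hk⟩
    · rw [L.apply_mul_gen_re R hj, L.apply_eq_zero_of_mem_radical (hre j hj), mul_zero]
    · rw [L.apply_mul_gen_im R hj hk]
      exact Finset.sum_eq_zero fun c _ => by
        rw [L.apply_eq_zero_of_mem_radical (him j k hj hk c), mul_zero]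
  · refine L.mem_radical_of_forall_gen_mul hβ hx fun y j k hjk => ?_
    rcases hjk with ⟨hj, rfl⟩ | ⟨hj, hk⟩
    · rw [L.apply_gen_mul_re R hj, L.apply_eq_zero_of_mem_radical (hre j hj), mul_zero]
    · rw [L.apply_gen_mul_im R hj hk]
      exact Finset.sum_eq_zero fun c _ => by
        rw [L.apply_eq_zero_of_mem_radical (him j k hj hk c), mul_zero]

/-- Lemma on the radical: the adjunction formulas for `( , )_L`
and the radical criterion. -/
theorem radical_criterion {I : Type*} [Countable I] (A : BCMatrix I) (C : CoMult A)
    (ν : I → ℕ → KQ) (hν : ∀ i l, A.validIdx i l → ν i l ≠ 0)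
    (L : LusztigForm A C ν) (R : RhoComponents A C) :
    -- (a)
    (∀ i, A.a i i = 2 → ∀ x y : A.FA,
      L.B (y * A.gen i 1) x = L.B (A.gen i 1) (A.gen i 1) * L.B y (R.rlow i x) ∧
      L.B (A.gen i 1 * y) x = L.B (A.gen i 1) (A.gen i 1) * L.B y (R.rup i x)) ∧
    -- (b)
    (∀ i l, A.a i i ≤ 0 → 1 ≤ l → ∀ x y : A.FA,
      L.B (y * A.gen i l) x =
        ∑ c : Composition l, L.B (A.gen i l) (A.fcomp i c) * L.B y (R.low i l x c) ∧
      L.B (A.gen i l * y) x =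
        ∑ c : Composition l, L.B (A.gen i l) (A.fcomp i c) * L.B y (R.up i l x c)) ∧
    -- (c)
    (∀ (β : I →₀ ℤ), β ≠ 0 → ∀ x ∈ A.weightSpace β,
      (((∀ i, A.a i i = 2 → R.rlow i x ∈ L.radical) ∧
        (∀ i l, A.a i i ≤ 0 → 1 ≤ l → ∀ c : Composition l, R.low i l x c ∈ L.radical)) →
          x ∈ L.radical) ∧
      (((∀ i, A.a i i = 2 → R.rup i x ∈ L.radical) ∧
        (∀ i l, A.a i i ≤ 0 → 1 ≤ l → ∀ c : Composition l, R.up i l x c ∈ L.radical)) →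
          x ∈ L.radical)) :=
  radical_criterion_general A C ν L R
end
end

section
/- Let * be the ℚ(q)-linear anti-involution of U_q(𝔤) determined by e_{il}*=e_{il}, f_{il}*=f_{il}, (q^h)*=q^{−h}. Then for all P,Q∈U^− one has (P*,Q*)_L=(P,Q)_L. -/
/- Setting: quantum Borcherds–Bozec algebras (Fan–Kang–Kim, arXiv:2108.04732).
   We axiomatize the quantum Borcherds–Bozec algebra `U_q(𝔤)` attached to a
   Borcherds–Cartan datum as a structure whose fields record its defining data. -/

open scoped TensorProduct

noncomputable section

/-- `q_i = q^{r_i}` in `F(q)`. -/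
def qiF (F : Type*) [Field F] (ri : ℤ) : RatFunc F := (RatFunc.X : RatFunc F) ^ ri

/-- The quantum factorial `[n]_i!` in `F(q)`. -/
def qfactF (F : Type*) [Field F] (ri : ℤ) (n : ℕ) : RatFunc F :=
  ∏ k ∈ Finset.range n,
    ((qiF F ri ^ ((k : ℤ) + 1) - qiF F ri ^ (-((k : ℤ) + 1))) / (qiF F ri - (qiF F ri)⁻¹))

/-- Divided power `x^{(n)} = x^n/[n]_i!`. -/
def dpow (F : Type*) [Field F] {U : Type*} [Ring U] [Algebra (RatFunc F) U]
    (ri : ℤ) (x : U) (n : ℕ) : U :=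
  (qfactF F ri n)⁻¹ • x ^ n

/-- `𝔸₀ ⊆ F(q)`: the rational functions regular at `q = 0`. -/
def A0set (F : Type*) [Field F] : Set (RatFunc F) := {x | x.denom.eval 0 ≠ 0}

/-- `q𝔸₀ ⊆ F(q)`. -/
def qA0set (F : Type*) [Field F] : Set (RatFunc F) :=
  {x | ∃ y ∈ A0set F, x = RatFunc.X * y}

/-- `𝔸 = F[q,q^{-1}] ⊆ F(q)`: the Laurent polynomials. -/
def ALaurSet (F : Type*) [Field F] : Set (RatFunc F) :=
  {x | ∃ (p : Polynomial F) (n : ℕ), x = algebraMap (Polynomial F) (RatFunc F) p / RatFunc.X ^ n}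

/-- Evaluation at `q = 0` (of an element of `𝔸₀`). -/
def ev0 {F : Type*} [Field F] (x : RatFunc F) : F := x.num.eval 0 / x.denom.eval 0

/-- `x ∈ 1 + q ℤ_{≥0}[[q]]`: as a Laurent series, `x` is a power series with
non-negative integer coefficients and constant term `1`. -/
def posIntSeries (F : Type*) [Field F] (x : RatFunc F) : Prop :=
  ∃ c : ℕ → ℕ, c 0 = 1 ∧
    (x : LaurentSeries F) =
      HahnSeries.ofPowerSeries ℤ F (PowerSeries.mk fun n => (c n : F))

open scoped Classical

/-- The quantum Borcherds–Bozec algebra `U = U_q(𝔤)` over `K = F(q)` attached to a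
Borcherds–Cartan datum `(A, P, P^∨, Π, Π^∨)`: the generators `q^h`, `e_{il}`,
`f_{il}` with the defining relations of `Û`, the comultiplication `Δ`, counit `ε`,
antipode `S`, the involution `ω` and the bar involution. -/
structure QBB (I : Type*) (F : Type*) [Field F] (P Pv : Type*)
    [AddCommGroup P] [AddCommGroup Pv]
    (U : Type*) [Ring U] [Algebra (RatFunc F) U] where
  /- The even symmetrizable Borcherds–Cartan matrix with symmetrizers `r i`. -/
  a : I → I → ℤ
  r : I → ℤ
  r_pos : ∀ i, 0 < r i
  symmetrizable : ∀ i j, r i * a i j = r j * a j i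
  diag : ∀ i, a i i = 2 ∨ (a i i ≤ 0 ∧ Even (a i i))
  offdiag : ∀ i j, i ≠ j → a i j ≤ 0
  /- The Borcherds–Cartan datum: weight lattice `P` (a free abelian group), dual
     weight lattice `P^∨`, pairing, simple coroots `h i`, linearly independent
     simple roots `al i`, fundamental weights `Lam i`. -/
  pair : Pv →+ P →+ ℤ
  hco : I → Pv
  al : I → P
  Lam : I → P
  pair_h_al : ∀ i j, pair (hco i) (al j) = a i j
  pair_h_Lam : ∀ i j, pair (hco j) (Lam i) = if j = i then 1 else 0
  P_free : Module.Free ℤ P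
  al_indep : LinearIndependent ℤ al
  /- Generators. -/
  qh : Pv → U
  e : I → ℕ → U
  f : I → ℕ → U
  qh_zero : qh 0 = 1
  qh_add : ∀ g h : Pv, qh (g + h) = qh g * qh h
  e_zero : ∀ i, e i 0 = 1
  f_zero : ∀ i, f i 0 = 1
  /- Defining relations of `Û`. -/
  qh_e : ∀ (h : Pv) (j : I) (l : ℕ),
    qh h * e j l = ((RatFunc.X : RatFunc F) ^ ((l : ℤ) * pair h (al j))) • (e j l * qh h)
  qh_f : ∀ (h : Pv) (j : I) (l : ℕ),
    qh h * f j l = ((RatFunc.X : RatFunc F) ^ (-((l : ℤ) * pair h (al j)))) • (f j l * qh h)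
  serre_e : ∀ (i j : I) (l : ℕ), a i i = 2 → ((a j j = 2 ∧ l = 1) ∨ (a j j ≤ 0 ∧ 1 ≤ l)) →
    ¬(j = i ∧ l = 1) →
    ∑ rr ∈ Finset.range ((1 - (l : ℤ) * a i j).toNat + 1),
      ((-1 : RatFunc F) ^ rr) •
        (dpow F (r i) (e i 1) rr * e j l * dpow F (r i) (e i 1) ((1 - (l : ℤ) * a i j).toNat - rr))
      = 0
  serre_f : ∀ (i j : I) (l : ℕ), a i i = 2 → ((a j j = 2 ∧ l = 1) ∨ (a j j ≤ 0 ∧ 1 ≤ l)) →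
    ¬(j = i ∧ l = 1) →
    ∑ rr ∈ Finset.range ((1 - (l : ℤ) * a i j).toNat + 1),
      ((-1 : RatFunc F) ^ rr) •
        (dpow F (r i) (f i 1) rr * f j l * dpow F (r i) (f i 1) ((1 - (l : ℤ) * a i j).toNat - rr))
      = 0
  comm_e : ∀ i k j l, a i j = 0 → e i k * e j l = e j l * e i k
  comm_f : ∀ i k j l, a i j = 0 → f i k * f j l = f j l * f i k
  /- Hopf algebra structure. -/
  Delta : U →ₐ[RatFunc F] (U ⊗[RatFunc F] U)
  Delta_qh : ∀ h : Pv, Delta (qh h) = qh h ⊗ₜ[RatFunc F] qh h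
  Delta_e : ∀ i l, Delta (e i l) = ∑ m ∈ Finset.range (l + 1),
    ((RatFunc.X : RatFunc F) ^ (((r i * a i i) / 2) * (m : ℤ) * ((l : ℤ) - (m : ℤ)))) •
      (e i m ⊗ₜ[RatFunc F] (qh ((-(m : ℤ) * r i) • hco i) * e i (l - m)))
  Delta_f : ∀ i l, Delta (f i l) = ∑ m ∈ Finset.range (l + 1),
    ((RatFunc.X : RatFunc F) ^ (-(((r i * a i i) / 2) * (m : ℤ) * ((l : ℤ) - (m : ℤ))))) •
      ((f i m * qh ((((l : ℤ) - (m : ℤ)) * r i) • hco i)) ⊗ₜ[RatFunc F] f i (l - m))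
  counit : U →ₐ[RatFunc F] RatFunc F
  counit_qh : ∀ h : Pv, counit (qh h) = 1
  counit_e : ∀ i l, 1 ≤ l → counit (e i l) = 0
  counit_f : ∀ i l, 1 ≤ l → counit (f i l) = 0
  antipode : U →ₗ[RatFunc F] U
  antipode_antimul : ∀ x y, antipode (x * y) = antipode y * antipode x
  antipode_one : antipode 1 = 1
  antipode_left : ∀ x : U,
    LinearMap.mul' (RatFunc F) U ((TensorProduct.map antipode LinearMap.id) (Delta x))
      = counit x • 1
  antipode_right : ∀ x : U,
    LinearMap.mul' (RatFunc F) U ((TensorProduct.map LinearMap.id antipode) (Delta x))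
      = counit x • 1
  /- The involution `ω`. -/
  omega : U →ₐ[RatFunc F] U
  omega_e : ∀ i l, omega (e i l) = f i l
  omega_f : ∀ i l, omega (f i l) = e i l
  omega_qh : ∀ h : Pv, omega (qh h) = qh (-h)
  /- The bar involution (`q ↦ q^{-1}`, fixing the Chevalley generators). -/
  barQ : RatFunc F →+* RatFunc F
  barQ_X : barQ RatFunc.X = (RatFunc.X : RatFunc F)⁻¹
  barQ_C : ∀ c : F, barQ (algebraMap F (RatFunc F) c) = algebraMap F (RatFunc F) c
  barU : U →+* U
  barU_smul : ∀ (c : RatFunc F) (x : U), barU (c • x) = barQ c • barU x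
  barU_invol : ∀ x, barU (barU x) = x
  barU_e : ∀ i l, barU (e i l) = e i l
  barU_f : ∀ i l, barU (f i l) = f i l

namespace QBB

variable {I F P Pv U : Type*} [Field F] [AddCommGroup P] [AddCommGroup Pv]
  [Ring U] [Algebra (RatFunc F) U]
variable (Q : QBB I F P Pv U)

/-- `(i,l) ∈ I^∞`. -/
def validIdx (i : I) (l : ℕ) : Prop :=
  (Q.a i i = 2 ∧ l = 1) ∨ (Q.a i i ≤ 0 ∧ 1 ≤ l)

/-- The negative part `U^-`, generated by the `f_{il}`. -/
def Um : Subalgebra (RatFunc F) U :=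
  Algebra.adjoin (RatFunc F) {x | ∃ i l, Q.validIdx i l ∧ x = Q.f i l}

/-- The positive part `U^+`, generated by the `e_{il}`. -/
def Up : Subalgebra (RatFunc F) U :=
  Algebra.adjoin (RatFunc F) {x | ∃ i l, Q.validIdx i l ∧ x = Q.e i l}

/-- `K_i^m = q_i^{m h_i}`. -/
def Kpow (i : I) (m : ℤ) : U := Q.qh ((m * Q.r i) • Q.hco i)

/-- `⟨h, β⟩` for `β = Σ c_i α_i` in the root lattice. -/
def pairRt (h : Pv) (β : I →₀ ℤ) : ℤ := β.sum fun i c => c * Q.pair h (Q.al i)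

/-- The weight space `U_β = {x | q^h x q^{-h} = q^{⟨h,β⟩} x}`. -/
def wt (β : I →₀ ℤ) : Submodule (RatFunc F) U where
  carrier := {x | ∀ h : Pv,
    Q.qh h * x = ((RatFunc.X : RatFunc F) ^ (Q.pairRt h β)) • (x * Q.qh h)}
  add_mem' := by
    intro x y hx hy h
    simp only [mul_add, add_mul, hx h, hy h, smul_add]
  zero_mem' := by
    intro h
    simp
  smul_mem' := by
    intro c x hx h
    simp only [Algebra.mul_smul_comm, Algebra.smul_mul_assoc, hx h, smul_comm c]

/-- The divided power `e_i^{(n)}`. -/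
def edpow (i : I) (n : ℕ) : U := dpow F (Q.r i) (Q.e i 1) n

/-- The divided power `f_i^{(n)}`. -/
def fdpow (i : I) (n : ℕ) : U := dpow F (Q.r i) (Q.f i 1) n

/-- The element `λ - α` of `P`, for `α = Σ c_i α_i` in the positive root lattice. -/
def wtSub (lam : P) (α : I →₀ ℤ) : P := lam - α.sum fun i c => c • Q.al i

end QBB
/-- `U_q(𝔤)` together with the family `ν` (with `ν_{il} ∈ 1 + qℤ_{≥0}[[q]]`),
Lusztig's bilinear form `( , )_L` on the negative part, and the (restricted)
comultiplication `ϱ` on `U^-`, multiplicative for the twisted product. -/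
structure QBBForm (I : Type*) (F : Type*) [Field F] (P Pv : Type*)
    [AddCommGroup P] [AddCommGroup Pv]
    (U : Type*) [Ring U] [Algebra (RatFunc F) U]
    extends QBB I F P Pv U where
  nu : I → ℕ → RatFunc F
  nu_pos : ∀ i l, toQBB.validIdx i l → posIntSeries F (nu i l)
  tmulU : (U ⊗[RatFunc F] U) →ₗ[RatFunc F] (U ⊗[RatFunc F] U) →ₗ[RatFunc F]
    (U ⊗[RatFunc F] U)
  tmulU_spec : ∀ (β γ : I →₀ ℤ) (x₁ x₂ y₁ y₂ : U),
    x₂ ∈ toQBB.wt β → y₁ ∈ toQBB.wt γ →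
    tmulU (x₁ ⊗ₜ x₂) (y₁ ⊗ₜ y₂) =
      ((RatFunc.X : RatFunc F) ^
        (-(β.sum fun i m => γ.sum fun j n => m * n * (r i * a i j)))) •
        ((x₁ * y₁) ⊗ₜ[RatFunc F] (x₂ * y₂))
  rhom : U →ₗ[RatFunc F] (U ⊗[RatFunc F] U)
  rhom_one : rhom 1 = 1 ⊗ₜ[RatFunc F] 1
  rhom_f : ∀ i l, toQBB.validIdx i l →
    rhom (f i l) = ∑ m ∈ Finset.range (l + 1),
      ((RatFunc.X : RatFunc F) ^ (-(((r i * a i i) / 2) * (m : ℤ) * ((l : ℤ) - (m : ℤ))))) •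
        (f i m ⊗ₜ[RatFunc F] f i (l - m))
  rhom_mul : ∀ x y, x ∈ toQBB.Um → y ∈ toQBB.Um →
    rhom (x * y) = tmulU (rhom x) (rhom y)
  LF : U →ₗ[RatFunc F] U →ₗ[RatFunc F] RatFunc F
  LF_symm : ∀ x y, LF x y = LF y x
  LF_one : LF 1 1 = 1
  LF_f : ∀ i l, toQBB.validIdx i l → LF (f i l) (f i l) = nu i l
  LF_wt : ∀ β γ : I →₀ ℤ, β ≠ γ → ∀ x ∈ toQBB.wt β, ∀ y ∈ toQBB.wt γ,
    x ∈ toQBB.Um → y ∈ toQBB.Um → LF x y = 0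
  LF_mul : ∀ x y z, x ∈ toQBB.Um → y ∈ toQBB.Um → z ∈ toQBB.Um →
    LF x (y * z) = LinearMap.BilinForm.tmul LF LF (rhom x) (y ⊗ₜ[RatFunc F] z)
namespace QBBForm

variable {I F P Pv U : Type*} [Field F] [AddCommGroup P] [AddCommGroup Pv]
  [Ring U] [Algebra (RatFunc F) U]
variable (Q : QBBForm I F P Pv U)

/-- The subalgebra `⟨f_{i1},…,f_{i,l-1}⟩`. -/
def fBelow (i : I) (l : ℕ) : Subalgebra (RatFunc F) U :=
  Algebra.adjoin (RatFunc F) {x | ∃ k, 1 ≤ k ∧ k < l ∧ x = Q.f i k}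

end QBBForm

/-- `U_q(𝔤)` together with its primitive generators `𝚋_{il}` (and
`𝚊_{il} = ω(𝚋_{il})`), recording their defining properties and the commutation
relation `𝚊_{il}𝚋_{jk} - 𝚋_{jk}𝚊_{il} = δ_{ij}δ_{lk} τ_{il}(K_i^l - K_i^{-l})`. -/
structure QBBPrim (I : Type*) (F : Type*) [Field F] (P Pv : Type*)
    [AddCommGroup P] [AddCommGroup Pv]
    (U : Type*) [Ring U] [Algebra (RatFunc F) U]
    extends QBBForm I F P Pv U where
  bgen : I → ℕ → U
  bgen_re : ∀ i, a i i = 2 → bgen i 1 = f i 1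
  bgen_mem : ∀ i l, a i i ≤ 0 → 1 ≤ l →
    bgen i l ∈ toQBB.Um ∧ bgen i l ∈ toQBB.wt (Finsupp.single i (-(l : ℤ)))
  bgen_tri : ∀ i l, a i i ≤ 0 → 1 ≤ l →
    bgen i l - f i l ∈ QBBForm.fBelow toQBBForm i l
  bgen_orth : ∀ i l, a i i ≤ 0 → 1 ≤ l →
    ∀ z ∈ QBBForm.fBelow toQBBForm i l, LF (bgen i l) z = 0
  bgen_bar : ∀ i l, toQBB.validIdx i l → barU (bgen i l) = bgen i l
  ab_comm : ∀ i l j k, toQBB.validIdx i l → toQBB.validIdx j k →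
    omega (bgen i l) * bgen j k - bgen j k * omega (bgen i l) =
      if i = j ∧ l = k then LF (bgen i l) (bgen i l) • (toQBB.Kpow i l - toQBB.Kpow i (-(l : ℤ)))
      else 0

namespace QBBPrim

variable {I F P Pv U : Type*} [Field F] [AddCommGroup P] [AddCommGroup Pv]
  [Ring U] [Algebra (RatFunc F) U]
variable (Q : QBBPrim I F P Pv U)

/-- The primitive generator `𝚊_{il} = ω(𝚋_{il})`. -/
def agen (i : I) (l : ℕ) : U := Q.omega (Q.bgen i l)

/-- `τ_{il} = (𝚋_{il},𝚋_{il})_L`. -/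
def tau (i : I) (l : ℕ) : RatFunc F := Q.LF (Q.bgen i l) (Q.bgen i l)

/-- `𝚋_{i,𝐜} = 𝚋_{ic₁} ⋯ 𝚋_{ic_t}` for a list `𝐜 = (c₁,…,c_t)`. -/
def bprod (i : I) (c : List ℕ) : U := (c.map (Q.bgen i)).prod

end QBBPrim

/-!
The anti-involution `*` is compatible with the twisted comultiplication:
`ϱ(x*) = σ(ϱ x)` where `σ (a ⊗ b) = b* ⊗ a*`. Indeed `*` preserves weights and the twist
`q^{-(β,γ)}` of the product on `U ⊗ U` is symmetric in `β, γ` by symmetrizability, so `σ`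
reverses twisted products, while `σ` fixes `ϱ(f_{il}) = Σ q^{…} f_{im} ⊗ f_{i,l-m}` because the
coefficient is symmetric under `m ↦ l - m`.

Hence `(x*, (yz)*)_L = (x*, z* y*)_L = (σ(ϱ x), z* ⊗ y*)` reduces the claim for `yz` to the claims
for `y` and `z`, and by induction on `y` it remains to treat `y = 1` and `y = f_{il}`. By
symmetry of the form these are the claims `(a, x*)_L = (a, x)_L` for `a = 1, f_{il}`; the same
induction, now on `x`, proves them, since `ϱ(a)` only involves the `*`-fixed elements `f_{im}`,
`m ≤ l`.
-/

section TensorSpan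

variable (R : Type*) {M : Type*} [CommRing R] [AddCommGroup M] [Module R M]

def tensorSpan (A : Set M) : Submodule R (M ⊗[R] M) :=
  Submodule.span R (Set.image2 (· ⊗ₜ[R] ·) A A)

variable {R}

lemma tmul_mem_tensorSpan {A : Set M} {a b : M} (ha : a ∈ A) (hb : b ∈ A) :
    a ⊗ₜ[R] b ∈ tensorSpan R A :=
  Submodule.subset_span (Set.mem_image2_of_mem ha hb)

lemma tensorSpan_mono {A B : Set M} (h : A ⊆ B) : tensorSpan R A ≤ tensorSpan R B :=
  Submodule.span_mono (Set.image2_subset h h)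

def flipMap (st : M →ₗ[R] M) : M ⊗[R] M →ₗ[R] M ⊗[R] M :=
  TensorProduct.map st st ∘ₗ (TensorProduct.comm R M M).toLinearMap

@[simp]
lemma flipMap_tmul (st : M →ₗ[R] M) (a b : M) : flipMap st (a ⊗ₜ[R] b) = st b ⊗ₜ[R] st a :=
  rfl

lemma LinearMap.BilinForm.tmul_flipMap {B : LinearMap.BilinForm R M} {st : M →ₗ[R] M}
    {A : Set M} {y z : M} (hy : ∀ a ∈ A, B (st a) (st y) = B a y)
    (hz : ∀ a ∈ A, B (st a) (st z) = B a z) {w : M ⊗[R] M} (hw : w ∈ tensorSpan R A) :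
    B.tmul B (flipMap st w) (st z ⊗ₜ st y) = B.tmul B w (y ⊗ₜ z) := by
  refine LinearMap.eqOn_span (f := (B.tmul B).flip (st z ⊗ₜ st y) ∘ₗ flipMap st)
    (g := (B.tmul B).flip (y ⊗ₜ z)) ?_ hw
  rintro _ ⟨a, ha, b, hb, rfl⟩
  simp [hy a ha, hz b hb, mul_comm]

end TensorSpan

namespace QBB

variable {I F P Pv U : Type*} [Field F] [AddCommGroup P] [AddCommGroup Pv]
  [Ring U] [Algebra (RatFunc F) U] (Q : QBB I F P Pv U)

lemma pairRt_zero_right (h : Pv) : Q.pairRt h 0 = 0 :=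
  Finsupp.sum_zero_index

lemma pairRt_add_right (h : Pv) (β γ : I →₀ ℤ) :
    Q.pairRt h (β + γ) = Q.pairRt h β + Q.pairRt h γ :=
  Finsupp.sum_add_index' (fun _ => zero_mul _) (fun _ _ _ => add_mul _ _ _)

lemma pairRt_single_right (h : Pv) (i : I) (c : ℤ) :
    Q.pairRt h (Finsupp.single i c) = c * Q.pair h (Q.al i) :=
  Finsupp.sum_single_index (zero_mul _)

lemma pairRt_neg_left (h : Pv) (β : I →₀ ℤ) : Q.pairRt (-h) β = -Q.pairRt h β := by
  simp [pairRt, Finsupp.sum]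

lemma one_mem_wt : (1 : U) ∈ Q.wt 0 := fun h => by
  rw [pairRt_zero_right, zpow_zero, one_smul, mul_one, one_mul]

lemma f_mem_wt (i : I) (l : ℕ) : Q.f i l ∈ Q.wt (Finsupp.single i (-(l : ℤ))) := fun h => by
  rw [Q.qh_f, pairRt_single_right, neg_mul]

lemma mul_mem_wt {β γ : I →₀ ℤ} {x y : U} (hx : x ∈ Q.wt β) (hy : y ∈ Q.wt γ) :
    x * y ∈ Q.wt (β + γ) := fun h => by
  rw [← mul_assoc, hx h, smul_mul_assoc, mul_assoc, hy h, mul_smul_comm, smul_smul,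
    ← zpow_add₀ RatFunc.X_ne_zero, pairRt_add_right, mul_assoc]

lemma rootForm_comm (β γ : I →₀ ℤ) :
    (β.sum fun i m => γ.sum fun j n => m * n * (Q.r i * Q.a i j)) =
      γ.sum fun i m => β.sum fun j n => m * n * (Q.r i * Q.a i j) := by
  rw [Finsupp.sum_comm]
  refine Finsupp.sum_congr fun j _ => Finsupp.sum_congr fun i _ => ?_
  linear_combination (β i * γ j) * Q.symmetrizable i j

lemma validIdx_of_le {i : I} {l m : ℕ} (hv : Q.validIdx i l) (hm : m ≤ l) (hm0 : 1 ≤ m) :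
    Q.validIdx i m := by
  rcases hv with ⟨ha, rfl⟩ | ⟨ha, -⟩
  · exact Or.inl ⟨ha, le_antisymm hm hm0⟩
  · exact Or.inr ⟨ha, hm0⟩

lemma f_mem_Um_of_le {i : I} {l m : ℕ} (hv : Q.validIdx i l) (hm : m ≤ l) : Q.f i m ∈ Q.Um := by
  rcases Nat.eq_zero_or_pos m with rfl | hm0
  · rw [Q.f_zero]
    exact one_mem _
  · exact Algebra.subset_adjoin ⟨i, m, Q.validIdx_of_le hv hm hm0, rfl⟩

def homUm : Set U := {x | x ∈ Q.Um ∧ ∃ β, x ∈ Q.wt β}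

lemma mul_mem_homUm {x y : U} (hx : x ∈ Q.homUm) (hy : y ∈ Q.homUm) : x * y ∈ Q.homUm := by
  obtain ⟨hx, β, hβ⟩ := hx
  obtain ⟨hy, γ, hγ⟩ := hy
  exact ⟨mul_mem hx hy, β + γ, Q.mul_mem_wt hβ hγ⟩

structure IsStar (st : U →ₗ[RatFunc F] U) : Prop where
  map_mul : ∀ x y, st (x * y) = st y * st x
  map_f : ∀ i l, Q.validIdx i l → st (Q.f i l) = Q.f i l
  map_qh : ∀ h, st (Q.qh h) = Q.qh (-h)

namespace IsStar

variable {Q} {st : U →ₗ[RatFunc F] U}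

lemma map_one (hst : Q.IsStar st) : st 1 = 1 := by
  simpa [Q.qh_zero] using hst.map_qh 0

lemma map_algebraMap (hst : Q.IsStar st) (c : RatFunc F) :
    st (algebraMap (RatFunc F) U c) = algebraMap (RatFunc F) U c := by
  rw [Algebra.algebraMap_eq_smul_one, map_smul, hst.map_one]

lemma map_f_of_le (hst : Q.IsStar st) {i : I} {l m : ℕ} (hv : Q.validIdx i l) (hm : m ≤ l) :
    st (Q.f i m) = Q.f i m := by
  rcases Nat.eq_zero_or_pos m with rfl | hm0
  · rw [Q.f_zero, hst.map_one]
  · exact hst.map_f i m (Q.validIdx_of_le hv hm hm0)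

lemma mem_wt (hst : Q.IsStar st) {β : I →₀ ℤ} {x : U} (hx : x ∈ Q.wt β) : st x ∈ Q.wt β := by
  intro h
  have hst_x := congrArg st (hx (-h))
  rw [hst.map_mul, hst.map_qh, map_smul, hst.map_mul, hst.map_qh, neg_neg,
    pairRt_neg_left] at hst_x
  rw [hst_x, smul_smul, ← zpow_add₀ RatFunc.X_ne_zero, add_neg_cancel, zpow_zero, one_smul]

lemma mem_Um (hst : Q.IsStar st) {x : U} (hx : x ∈ Q.Um) : st x ∈ Q.Um := by
  induction hx using Algebra.adjoin_induction with
  | mem x hx =>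
    obtain ⟨i, l, hv, rfl⟩ := hx
    rw [hst.map_f i l hv]
    exact Algebra.subset_adjoin ⟨i, l, hv, rfl⟩
  | algebraMap c => rw [hst.map_algebraMap]; exact Subalgebra.algebraMap_mem _ c
  | add x y _ _ hx hy => rw [map_add]; exact add_mem hx hy
  | mul x y _ _ hx hy => rw [hst.map_mul]; exact mul_mem hy hx

end IsStar

end QBB

namespace QBBForm

variable {I F P Pv U : Type*} [Field F] [AddCommGroup P] [AddCommGroup Pv]
  [Ring U] [Algebra (RatFunc F) U] (Q : QBBForm I F P Pv U) {st : U →ₗ[RatFunc F] U}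

local notation "𝕂" => RatFunc F

lemma tmulU_mem_tensorSpan {u v : U ⊗[𝕂] U} (hu : u ∈ tensorSpan 𝕂 Q.homUm)
    (hv : v ∈ tensorSpan 𝕂 Q.homUm) : Q.tmulU u v ∈ tensorSpan 𝕂 Q.homUm := by
  have huv := Submodule.apply_mem_map₂ Q.tmulU hu hv
  rw [tensorSpan, Submodule.map₂_span_span] at huv
  refine Submodule.span_le.mpr ?_ huv
  rintro _ ⟨_, ⟨x₁, hx₁, x₂, hx₂, rfl⟩, _, ⟨y₁, hy₁, y₂, hy₂, rfl⟩, rfl⟩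
  obtain ⟨β, hβ⟩ := hx₂.2
  obtain ⟨γ, hγ⟩ := hy₁.2
  dsimp only
  rw [Q.tmulU_spec β γ x₁ x₂ y₁ y₂ hβ hγ]
  exact Submodule.smul_mem _ _
    (tmul_mem_tensorSpan (Q.mul_mem_homUm hx₁ hy₁) (Q.mul_mem_homUm hx₂ hy₂))

lemma flipMap_tmulU (hst : Q.IsStar st) {u v : U ⊗[𝕂] U} (hu : u ∈ tensorSpan 𝕂 Q.homUm)
    (hv : v ∈ tensorSpan 𝕂 Q.homUm) :
    flipMap st (Q.tmulU u v) = Q.tmulU (flipMap st v) (flipMap st u) := by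
  refine LinearMap.eqOn_span (f := flipMap st ∘ₗ Q.tmulU.flip v)
    (g := Q.tmulU (flipMap st v) ∘ₗ flipMap st) ?_ hu
  rintro _ ⟨x₁, -, x₂, ⟨-, β, hβ⟩, rfl⟩
  refine LinearMap.eqOn_span (f := flipMap st ∘ₗ Q.tmulU (x₁ ⊗ₜ x₂))
    (g := Q.tmulU.flip (flipMap st (x₁ ⊗ₜ x₂)) ∘ₗ flipMap st) ?_ hv
  rintro _ ⟨y₁, ⟨-, γ, hγ⟩, y₂, -, rfl⟩
  simp only [LinearMap.comp_apply, LinearMap.flip_apply, flipMap_tmul]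
  rw [Q.tmulU_spec β γ _ _ _ _ hβ hγ,
    Q.tmulU_spec γ β _ _ _ _ (hst.mem_wt hγ) (hst.mem_wt hβ), map_smul, flipMap_tmul,
    hst.map_mul, hst.map_mul, Q.rootForm_comm]

lemma rhom_f_mem_tensorSpan {i : I} {l m : ℕ} (hv : Q.validIdx i l) (hm : m ≤ l) :
    Q.rhom (Q.f i m) ∈ tensorSpan 𝕂 (Q.f i '' Set.Iic l) := by
  have hf : ∀ k ≤ m, Q.f i k ∈ Q.f i '' Set.Iic l := fun k hk => ⟨k, hk.trans hm, rfl⟩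
  rcases Nat.eq_zero_or_pos m with rfl | hm0
  · have h1 : (1 : U) ∈ Q.f i '' Set.Iic l := Q.f_zero i ▸ hf 0 le_rfl
    rw [Q.f_zero, Q.rhom_one]
    exact tmul_mem_tensorSpan h1 h1
  · rw [Q.rhom_f i m (Q.validIdx_of_le hv hm hm0)]
    refine Submodule.sum_mem _ fun k hk => Submodule.smul_mem _ _ ?_
    exact tmul_mem_tensorSpan (hf k (Finset.mem_range_succ_iff.mp hk)) (hf _ (Nat.sub_le m k))

lemma f_image_Iic_subset_homUm {i : I} {l : ℕ} (hv : Q.validIdx i l) :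
    Q.f i '' Set.Iic l ⊆ Q.homUm := by
  rintro _ ⟨m, hm, rfl⟩
  exact ⟨Q.f_mem_Um_of_le hv hm, _, Q.f_mem_wt i m⟩

lemma flipMap_rhom_f (hst : Q.IsStar st) {i : I} {l : ℕ} (hv : Q.validIdx i l) :
    flipMap st (Q.rhom (Q.f i l)) = Q.rhom (Q.f i l) := by
  rw [Q.rhom_f i l hv, map_sum]
  conv_rhs => rw [← Finset.sum_range_reflect]
  refine Finset.sum_congr rfl fun m hm => ?_
  have hm : m ≤ l := Finset.mem_range_succ_iff.mp hm
  rw [map_smul, flipMap_tmul, hst.map_f_of_le hv hm, hst.map_f_of_le hv (Nat.sub_le l m),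
    add_tsub_cancel_right, Nat.sub_sub_self hm, Nat.cast_sub hm]
  congr 2
  ring

lemma rhom_mem_tensorSpan {x : U} (hx : x ∈ Q.Um) : Q.rhom x ∈ tensorSpan 𝕂 Q.homUm := by
  induction hx using Algebra.adjoin_induction with
  | mem x hx =>
    obtain ⟨i, l, hv, rfl⟩ := hx
    exact tensorSpan_mono (Q.f_image_Iic_subset_homUm hv) (Q.rhom_f_mem_tensorSpan hv le_rfl)
  | algebraMap c =>
    rw [Algebra.algebraMap_eq_smul_one, map_smul, Q.rhom_one]
    exact Submodule.smul_mem _ _ (tmul_mem_tensorSpan ⟨one_mem _, 0, Q.one_mem_wt⟩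
      ⟨one_mem _, 0, Q.one_mem_wt⟩)
  | add x y _ _ hx hy => rw [map_add]; exact add_mem hx hy
  | mul x y hx hy hx' hy' => rw [Q.rhom_mul x y hx hy]; exact Q.tmulU_mem_tensorSpan hx' hy'

lemma rhom_star (hst : Q.IsStar st) {x : U} (hx : x ∈ Q.Um) :
    Q.rhom (st x) = flipMap st (Q.rhom x) := by
  induction hx using Algebra.adjoin_induction with
  | mem x hx =>
    obtain ⟨i, l, hv, rfl⟩ := hx
    rw [hst.map_f i l hv, Q.flipMap_rhom_f hst hv]
  | algebraMap c =>
    rw [hst.map_algebraMap, Algebra.algebraMap_eq_smul_one, map_smul, Q.rhom_one, map_smul,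
      flipMap_tmul, hst.map_one]
  | add x y _ _ hx hy => simp only [map_add, hx, hy]
  | mul x y hx hy hx' hy' =>
    rw [hst.map_mul, Q.rhom_mul _ _ (hst.mem_Um hy) (hst.mem_Um hx), hx', hy',
      ← Q.flipMap_tmulU hst (Q.rhom_mem_tensorSpan hx) (Q.rhom_mem_tensorSpan hy),
      Q.rhom_mul x y hx hy]

lemma LF_star_mul (hst : Q.IsStar st) {A : Set U} {x y z : U} (hx : x ∈ Q.Um) (hy : y ∈ Q.Um)
    (hz : z ∈ Q.Um) (hA : Q.rhom x ∈ tensorSpan 𝕂 A)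
    (hAy : ∀ a ∈ A, Q.LF (st a) (st y) = Q.LF a y) (hAz : ∀ a ∈ A, Q.LF (st a) (st z) = Q.LF a z) :
    Q.LF (st x) (st (y * z)) = Q.LF x (y * z) := by
  rw [hst.map_mul, Q.LF_mul _ _ _ (hst.mem_Um hx) (hst.mem_Um hz) (hst.mem_Um hy),
    Q.rhom_star hst hx, LinearMap.BilinForm.tmul_flipMap hAy hAz hA, Q.LF_mul x y z hx hy hz]

lemma LF_star_of_mem (hst : Q.IsStar st) {A : Set U} (hAUm : A ⊆ Q.Um)
    (hAst : ∀ a ∈ A, st a = a) (hArhom : ∀ a ∈ A, Q.rhom a ∈ tensorSpan 𝕂 A) {a y : U}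
    (ha : a ∈ A) (hy : y ∈ Q.Um) : Q.LF (st a) (st y) = Q.LF a y := by
  revert a
  induction hy using Algebra.adjoin_induction with
  | mem y hy =>
    obtain ⟨i, l, hv, rfl⟩ := hy
    intro a ha
    rw [hst.map_f i l hv, hAst a ha]
  | algebraMap c =>
    intro a ha
    rw [hst.map_algebraMap, hAst a ha]
  | add y z _ _ hy hz =>
    intro a ha
    simp only [map_add, hy ha, hz ha]
  | mul y z hy hz hy' hz' =>
    intro a ha
    exact Q.LF_star_mul hst (hAUm ha) hy hz (hArhom a ha) (fun _ => hy') (fun _ => hz')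

lemma LF_star_one (hst : Q.IsStar st) {x : U} (hx : x ∈ Q.Um) : Q.LF (st x) 1 = Q.LF x 1 := by
  have h := Q.LF_star_of_mem hst (A := {1}) (Set.singleton_subset_iff.mpr (one_mem _))
    (fun _ ha => ha ▸ hst.map_one) (fun _ ha => by
      rw [ha, Q.rhom_one]
      exact tmul_mem_tensorSpan rfl rfl) rfl hx
  rw [hst.map_one] at h
  rw [Q.LF_symm, h, Q.LF_symm]

lemma LF_star_f (hst : Q.IsStar st) {i : I} {l : ℕ} (hv : Q.validIdx i l) {x : U}
    (hx : x ∈ Q.Um) : Q.LF (st x) (Q.f i l) = Q.LF x (Q.f i l) := by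
  have h := Q.LF_star_of_mem hst (A := Q.f i '' Set.Iic l)
    (fun _ ha => (Q.f_image_Iic_subset_homUm hv ha).1)
    (by rintro _ ⟨m, hm, rfl⟩; exact hst.map_f_of_le hv hm)
    (by rintro _ ⟨m, hm, rfl⟩; exact Q.rhom_f_mem_tensorSpan hv hm)
    ⟨l, Set.mem_Iic.mpr le_rfl, rfl⟩ hx
  rw [hst.map_f i l hv] at h
  rw [Q.LF_symm, h, Q.LF_symm]

lemma LF_star (hst : Q.IsStar st) {x y : U} (hx : x ∈ Q.Um) (hy : y ∈ Q.Um) :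
    Q.LF (st x) (st y) = Q.LF x y := by
  revert x
  induction hy using Algebra.adjoin_induction with
  | mem y hy =>
    obtain ⟨i, l, hv, rfl⟩ := hy
    intro x hx
    rw [hst.map_f i l hv, Q.LF_star_f hst hv hx]
  | algebraMap c =>
    intro x hx
    rw [hst.map_algebraMap, Algebra.algebraMap_eq_smul_one, map_smul, map_smul,
      Q.LF_star_one hst hx]
  | add y z _ _ hy hz =>
    intro x hx
    simp only [map_add, hy hx, hz hx]
  | mul y z hy hz hy' hz' =>
    intro x hx
    exact Q.LF_star_mul hst hx hy hz (Q.rhom_mem_tensorSpan hx) (fun _ ha => hy' ha.1)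
      (fun _ ha => hz' ha.1)

end QBBForm

theorem star_invariance_of_form_general {I P Pv U : Type*}
    [AddCommGroup P] [AddCommGroup Pv] [Ring U] [Algebra (RatFunc ℚ) U]
    (Q : QBBPrim I ℚ P Pv U)
    (st : U →ₗ[RatFunc ℚ] U)
    (st_antimul : ∀ x y : U, st (x * y) = st y * st x)
    (st_f : ∀ i l, Q.toQBB.validIdx i l → st (Q.f i l) = Q.f i l)
    (st_qh : ∀ h : Pv, st (Q.qh h) = Q.qh (-h)) :
    ∀ x y : U, x ∈ Q.toQBB.Um → y ∈ Q.toQBB.Um → Q.LF (st x) (st y) = Q.LF x y :=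
  fun _ _ hx hy => Q.LF_star ⟨st_antimul, st_f, st_qh⟩ hx hy

/-- the `F(q)`-linear anti-involution `*` of `U_q(𝔤)` with
`e_{il}* = e_{il}`, `f_{il}* = f_{il}`, `(q^h)* = q^{-h}` is an isometry of
Lusztig's form on `U^-`: `(P*,Q*)_L = (P,Q)_L`. -/
theorem star_invariance_of_form {I P Pv U : Type*}
    [AddCommGroup P] [AddCommGroup Pv] [Ring U] [Algebra (RatFunc ℚ) U]
    (Q : QBBPrim I ℚ P Pv U)
    (st : U →ₗ[RatFunc ℚ] U)
    (st_antimul : ∀ x y : U, st (x * y) = st y * st x)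
    (st_invol : ∀ x : U, st (st x) = x)
    (st_e : ∀ i l, Q.toQBB.validIdx i l → st (Q.e i l) = Q.e i l)
    (st_f : ∀ i l, Q.toQBB.validIdx i l → st (Q.f i l) = Q.f i l)
    (st_qh : ∀ h : Pv, st (Q.qh h) = Q.qh (-h)) :
    ∀ x y : U, x ∈ Q.toQBB.Um → y ∈ Q.toQBB.Um → Q.LF (st x) (st y) = Q.LF x y :=
  star_invariance_of_form_general Q st st_antimul st_f st_qh
end
end
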